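/- arXiv:2512.00605 — 4 statements merged into one kernel-verified Lean document; each statement's English description precedes it below -/
import Mathlib

section
/- Let M = (E, 𝓘) be a matroid on a finite groundset E with set of bases 𝓑, and let μ : E → ℝ assign positive, pairwise distinct weights. Let B* be a maximum-weight basis. Then for every basis B ∈ 𝓑 with μ(B) < μ(B*), there exists a neighbor B⁺ ∈ 𝓝_{B,μ} such that μ(B⁺) > μ(B). (Theorem 1, Unimodality.) -/
open Matroid

/-- Total weight of a set of elements: `μ(S) = ∑_{e ∈ S} μ_e`. -/
noncomputable def weight {α : Type*} (μ : α → ℝ) (S : Set α) : ℝ := ∑ᶠ e ∈ S, μ e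

/-- The neighborhood `𝓝_{B,μ}` of a basis `B`: all sets `(B \ {σ_{B,μ}(e)}) ∪ {e}` for
`e ∈ E \ B` such that `K_e(B) = {x ∈ B : (B \ {x}) ∪ {e}` is a basis`}` is nonempty, where
`σ_{B,μ}(e)` is the minimum-weight element of `K_e(B)`. -/
def neighborhood {α : Type*} (M : Matroid α) (μ : α → ℝ) (B : Set α) : Set (Set α) :=
  {Bp | ∃ e ∈ M.E \ B, ∃ x ∈ B,
      M.IsBase (B \ {x} ∪ {e}) ∧
      (∀ y ∈ B, M.IsBase (B \ {y} ∪ {e}) → μ x ≤ μ y) ∧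
      Bp = B \ {x} ∪ {e}}

open Set


lemma weight_insert {α : Type*} (μ : α → ℝ) {S : Set α} (hS : S.Finite) {f : α} (hf : f ∉ S) :
    weight μ (insert f S) = μ f + weight μ S := finsum_mem_insert μ hf hS

lemma weight_insert_diff {α : Type*} (μ : α → ℝ) {S : Set α} (hS : S.Finite) {x f : α}
    (hx : x ∈ S) (hf : f ∉ S) :
    weight μ (insert f (S \ {x})) = weight μ S - μ x + μ f := by
  have h1 : weight μ (insert f (S \ {x})) = μ f + weight μ (S \ {x}) :=
    weight_insert μ hS.diff (fun h => hf h.1)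
  have h2 : weight μ (insert x (S \ {x})) = μ x + weight μ (S \ {x}) :=
    weight_insert μ hS.diff (fun h => h.2 rfl)
  rw [Set.insert_diff_singleton, Set.insert_eq_self.2 hx] at h2
  rw [h1]; linarith

/-- Symmetric basis exchange. -/
lemma sym_exchange {α : Type*} {M : Matroid α} {B B' : Set α} (hB : M.IsBase B) (hB' : M.IsBase B')
    {e : α} (he : e ∈ B \ B') :
    ∃ f ∈ B' \ B, M.IsBase (insert f (B \ {e})) ∧ M.IsBase (insert e (B' \ {f})) := by
  set C : Set α := {f ∈ B' | e ∈ M.closure (B' \ {f})} with hC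
  set K : Set α := B' \ C with hK
  have heE : e ∈ M.E := hB.subset_ground he.1
  have heK : e ∈ M.closure K := by
    rcases eq_empty_or_nonempty C with h | h
    · have : K = B' := by rw [hK, h, diff_empty]
      rw [this, hB'.closure_eq]; exact heE
    · have hJs : ((fun f => B' \ {f}) '' C).Nonempty := h.image _
      have hsInter : ⋂₀ ((fun f => B' \ {f}) '' C) = K := by
        rw [sInter_image]
        ext y
        simp only [mem_iInter, mem_diff, hK, hC, mem_setOf_eq]
        constructor
        · intro hy
          obtain ⟨c, hc⟩ := h
          refine ⟨(hy c hc).1, fun hyC => (hy y hyC).2 rfl⟩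
        · rintro ⟨hyB', hyC⟩ c hc
          exact ⟨hyB', fun hyc => hyC (by rwa [mem_singleton_iff.1 hyc])⟩
      have := hB'.indep.closure_sInter_eq_biInter_closure_of_forall_subset hJs
        (by rintro J ⟨f, hf, rfl⟩; exact diff_subset)
      rw [hsInter] at this
      rw [this, mem_iInter₂]
      rintro J ⟨f, hf, rfl⟩
      exact hf.2
  have heX : e ∉ M.closure (B \ {e}) := hB.indep.notMem_closure_diff_of_mem he.1
  have hKX : ¬ K ⊆ M.closure (B \ {e}) := by
    intro h
    exact heX (M.closure_subset_closure_of_subset_closure h heK)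
  obtain ⟨f, hfK, hfX⟩ := not_subset.1 hKX
  have hfB' : f ∈ B' := hfK.1
  have hfE : f ∈ M.E := hB'.subset_ground hfB'
  have hfB : f ∉ B := by
    intro hfB
    have hfe : f ≠ e := fun h => he.2 (h ▸ hfB')
    exact hfX (M.subset_closure (B \ {e}) (diff_subset.trans hB.subset_ground) ⟨hfB, hfe⟩)
  have hind1 : M.Indep (insert f (B \ {e})) := by
    rw [(hB.indep.subset diff_subset).insert_indep_iff_of_notMem
      (fun h => hfB h.1)]
    exact ⟨hfE, hfX⟩
  have hind2 : M.Indep (insert e (B' \ {f})) := by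
    rw [(hB'.indep.subset diff_subset).insert_indep_iff_of_notMem
      (fun h => he.2 h.1)]
    refine ⟨heE, fun hecl => hfK.2 ⟨hfB', hecl⟩⟩
  exact ⟨f, ⟨hfB', hfB⟩, hB.exchange_isBase_of_indep hfB hind1,
    hB'.exchange_isBase_of_indep he.2 hind2⟩

/-- Local optimality implies global optimality. -/
lemma global_of_local {α : Type*} {M : Matroid α} (hfin : M.E.Finite) (μ : α → ℝ)
    {B : Set α} (hB : M.IsBase B)
    (hloc : ∀ e ∉ B, ∀ x ∈ B, M.IsBase (insert e (B \ {x})) → μ e ≤ μ x) :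
    ∀ B', M.IsBase B' → weight μ B' ≤ weight μ B := by
  suffices h : ∀ n B', M.IsBase B' → (B' \ B).ncard ≤ n → weight μ B' ≤ weight μ B by
    intro B' hB'
    exact h _ B' hB' le_rfl
  intro n
  induction n with
  | zero =>
    intro B' hB' hcard
    have hfinB' : (B' \ B).Finite := (hfin.subset hB'.subset_ground).diff
    have : B' \ B = ∅ := by
      rw [← Set.ncard_eq_zero hfinB']; omega
    have hsub : B' ⊆ B := diff_eq_empty.1 this
    rw [hB'.eq_of_subset_isBase hB hsub]
  | succ n ih =>
    intro B' hB' hcard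
    have hfinB' : (B' \ B).Finite := (hfin.subset hB'.subset_ground).diff
    rcases eq_empty_or_nonempty (B' \ B) with h | ⟨e, he⟩
    · rw [hB'.eq_of_subset_isBase hB (diff_eq_empty.1 h)]
    · obtain ⟨f, hf, hbase1, hbase2⟩ := sym_exchange hB' hB he
      have hle : μ e ≤ μ f := hloc e he.2 f hf.1 hbase2
      have hfinBB' : B'.Finite := hfin.subset hB'.subset_ground
      have hwt : weight μ (insert f (B' \ {e})) = weight μ B' - μ e + μ f :=
        weight_insert_diff μ hfinBB' he.1 hf.2
      have hdiff : insert f (B' \ {e}) \ B = (B' \ B) \ {e} := by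
        ext y
        simp only [mem_diff, mem_insert_iff, mem_singleton_iff]
        constructor
        · rintro ⟨rfl | ⟨hyB', hye⟩, hyB⟩
          · exact absurd hf.1 hyB
          · exact ⟨⟨hyB', hyB⟩, hye⟩
        · rintro ⟨⟨hyB', hyB⟩, hye⟩
          exact ⟨Or.inr ⟨hyB', hye⟩, hyB⟩
      have hcard' : (insert f (B' \ {e}) \ B).ncard ≤ n := by
        rw [hdiff]
        have := Set.ncard_diff_singleton_lt_of_mem he hfinB'
        have h2 : ((B' \ B) \ {e}).ncard = (B' \ B).ncard - 1 :=
          Set.ncard_diff_singleton_of_mem he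
        omega
      have := ih (insert f (B' \ {e})) hbase1 hcard'
      linarith


/-- Theorem 1 (Unimodality): for any basis `B` of strictly smaller weight than a
maximum-weight basis `B*`, some neighbor of `B` has strictly larger weight than `B`. -/
theorem unimodality {α : Type*} (M : Matroid α) (hfin : M.E.Finite) (μ : α → ℝ)
    (hpos : ∀ e ∈ M.E, 0 < μ e)
    (hinj : ∀ x ∈ M.E, ∀ y ∈ M.E, x ≠ y → μ x ≠ μ y)
    (Bstar : Set α) (hBstar : M.IsBase Bstar)
    (hmax : ∀ B, M.IsBase B → weight μ B ≤ weight μ Bstar)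
    (B : Set α) (hB : M.IsBase B) (hlt : weight μ B < weight μ Bstar) :
    ∃ Bplus ∈ neighborhood M μ B, weight μ B < weight μ Bplus := by
  by_cases hloc : ∀ e ∉ B, ∀ x ∈ B, M.IsBase (insert e (B \ {x})) → μ e ≤ μ x
  · exact absurd (global_of_local hfin μ hB hloc Bstar hBstar) (not_le.2 hlt)
  push_neg at hloc
  obtain ⟨e, heB, x, hxB, hbase, hxe⟩ := hloc
  set K : Set α := {y ∈ B | M.IsBase (insert e (B \ {y}))} with hK
  have hKne : K.Nonempty := ⟨x, hxB, hbase⟩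
  have hKfin : K.Finite := (hfin.subset hB.subset_ground).subset (sep_subset _ _)
  obtain ⟨x₀, hx₀K, hx₀min⟩ := Set.exists_min_image K μ hKfin hKne
  have heE : e ∈ M.E := hbase.subset_ground (mem_insert e _)
  have hBfin : B.Finite := hfin.subset hB.subset_ground
  refine ⟨B \ {x₀} ∪ {e}, ⟨e, ⟨heE, heB⟩, x₀, hx₀K.1, ?_, ?_, rfl⟩, ?_⟩
  · rw [union_singleton]; exact hx₀K.2
  · intro y hyB hbase'
    rw [union_singleton] at hbase'
    exact hx₀min y ⟨hyB, hbase'⟩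
  · rw [union_singleton, weight_insert_diff μ hBfin hx₀K.1 heB]
    have := hx₀min x ⟨hxB, hbase⟩
    linarith
end

section
/- Let M = (E, 𝓘) be a matroid on a finite groundset E with set of bases 𝓑, let μ : E → ℝ assign positive, pairwise distinct weights, let B* be a maximum-weight basis, and let B be a basis with B ≠ B*. Then there exist x ∈ B \ B* and y ∈ B* \ B such that (B \ {x}) ∪ {y} ∈ 𝓑 and μ_y > μ_x; in particular μ((B \ {x}) ∪ {y}) > μ(B). -/
open Matroid

lemma weight_exchange {α : Type*} (μ : α → ℝ) {B : Set α} (hfin : B.Finite) {x y : α}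
    (hx : x ∈ B) (hy : y ∉ B) :
    weight μ (B \ {x} ∪ {y}) = weight μ B - μ x + μ y := by
  have h1 : weight μ (B \ {x} ∪ {y}) = weight μ (B \ {x}) + μ y := by
    rw [weight, finsum_mem_union (by simp [Set.disjoint_singleton_right, hy])
      (hfin.subset Set.diff_subset) (Set.finite_singleton y), finsum_mem_singleton]
    rfl
  have h2 : weight μ B = weight μ (B \ {x}) + μ x := by
    nth_rewrite 1 [show B = (B \ {x}) ∪ {x} by simp [Set.diff_union_self, hx]]
    rw [weight, finsum_mem_union (by simp) (hfin.subset Set.diff_subset)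
      (Set.finite_singleton x), finsum_mem_singleton]
    rfl
  rw [h1, h2]; ring

/-- Symmetric basis exchange. -/
lemma symm_exchange {α : Type*} {M : Matroid α} {B₁ B₂ : Set α} (hB₁ : M.IsBase B₁)
    (hB₂ : M.IsBase B₂) {x : α} (hx : x ∈ B₁ \ B₂) :
    ∃ y ∈ B₂ \ B₁, M.IsBase (B₁ \ {x} ∪ {y}) ∧ M.IsBase (B₂ \ {y} ∪ {x}) := by
  set I := B₁ \ {x} with hIdef
  have hI : M.Indep I := hB₁.indep.subset Set.diff_subset
  have hxI : x ∉ M.closure I := hB₁.indep.notMem_closure_diff_of_mem hx.1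
  set S : Set α := {y ∈ B₂ | x ∉ M.closure (B₂ \ {y})} with hSdef
  have hSB₂ : S ⊆ B₂ := fun y hy => hy.1
  have hxE : x ∈ M.E := hB₁.subset_ground hx.1
  -- x is in the closure of S
  have hxS : x ∈ M.closure S := by
    set T : Set α := B₂ \ S with hTdef
    rcases T.eq_empty_or_nonempty with hT | hT
    · have : S = B₂ := hSB₂.antisymm (by
        intro y hy
        by_contra hyS
        exact (Set.eq_empty_iff_forall_notMem.1 hT y) ⟨hy, hyS⟩)
      rw [this, hB₂.closure_eq]; exact hxE
    · have hJs : M.closure (⋂₀ ((fun y => B₂ \ {y}) '' T)) =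
          ⋂ J ∈ ((fun y => B₂ \ {y}) '' T), M.closure J :=
        hB₂.indep.closure_sInter_eq_biInter_closure_of_forall_subset (hT.image _)
          (by rintro J ⟨y, _, rfl⟩; exact Set.diff_subset)
      have hInter : ⋂₀ ((fun y => B₂ \ {y}) '' T) = S := by
        ext z
        simp only [Set.sInter_image, Set.mem_iInter, Set.mem_diff, Set.mem_singleton_iff]
        constructor
        · intro h
          obtain ⟨t, ht⟩ := hT
          have hz : z ∈ B₂ := (h t ht).1
          refine ⟨hz, ?_⟩
          by_contra hzx
          have hzT : z ∈ T := ⟨hz, fun hzS => hzS.2 hzx⟩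
          exact (h z hzT).2 rfl
        · rintro ⟨hz1, hz2⟩ t ht
          exact ⟨hz1, fun h => (ht.2 (h ▸ ⟨hz1, hz2⟩))⟩
      rw [hInter] at hJs
      rw [hJs]
      simp only [Set.mem_iInter]
      rintro J ⟨y, hyT, rfl⟩
      by_contra hcon
      exact hyT.2 ⟨hyT.1, hcon⟩
  -- get y ∈ S outside the closure of I
  have hnotsub : ¬ S ⊆ M.closure I := by
    intro hsub
    exact hxI (by
      have := M.closure_subset_closure_of_subset_closure hsub
      exact this hxS)
  obtain ⟨y, hyS, hyI⟩ := Set.not_subset.1 hnotsub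
  have hyB₂ : y ∈ B₂ := hyS.1
  have hyB₁ : y ∉ B₁ := by
    intro hyB₁
    have hyx : y ≠ x := fun h => hx.2 (h ▸ hyB₂)
    exact hyI (M.mem_closure_of_mem ⟨hyB₁, hyx⟩ hI.subset_ground)
  have hyE : y ∈ M.E := hB₂.subset_ground hyB₂
  have hynI : y ∉ I := fun h => hyI (M.mem_closure_of_mem h hI.subset_ground)
  refine ⟨y, ⟨hyB₂, hyB₁⟩, ?_, ?_⟩
  · rw [Set.union_singleton]
    refine hB₁.exchange_isBase_of_indep hyB₁ ?_
    rw [hI.insert_indep_iff_of_notMem hynI]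
    exact ⟨hyE, hyI⟩
  · rw [Set.union_singleton]
    refine hB₂.exchange_isBase_of_indep hx.2 ?_
    have hJ : M.Indep (B₂ \ {y}) := hB₂.indep.subset Set.diff_subset
    rw [hJ.insert_indep_iff_of_notMem (fun h => hx.2 h.1)]
    exact ⟨hxE, hyS.2⟩

/-- For any basis `B ≠ B*`, there is an exchange `(B \ {x}) ∪ {y}` with `x ∈ B \ B*`,
`y ∈ B* \ B` that is a basis of strictly larger weight (since `μ y > μ x`). -/
theorem exists_improving_exchange {α : Type*} (M : Matroid α) (hfin : M.E.Finite) (μ : α → ℝ)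
    (hpos : ∀ e ∈ M.E, 0 < μ e)
    (hinj : ∀ x ∈ M.E, ∀ y ∈ M.E, x ≠ y → μ x ≠ μ y)
    (Bstar : Set α) (hBstar : M.IsBase Bstar)
    (hmax : ∀ B, M.IsBase B → weight μ B ≤ weight μ Bstar)
    (B : Set α) (hB : M.IsBase B) (hne : B ≠ Bstar) :
    ∃ x ∈ B \ Bstar, ∃ y ∈ Bstar \ B,
      M.IsBase (B \ {x} ∪ {y}) ∧ μ x < μ y ∧ weight μ B < weight μ (B \ {x} ∪ {y}) := by
  obtain ⟨x, hx⟩ : (B \ Bstar).Nonempty := by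
    rw [Set.nonempty_iff_ne_empty]
    intro h
    exact hne (hB.eq_of_subset_isBase hBstar (Set.diff_eq_empty.1 h))
  obtain ⟨y, hy, hbase1, hbase2⟩ := symm_exchange hB hBstar hx
  have hxE : x ∈ M.E := hB.subset_ground hx.1
  have hyE : y ∈ M.E := hBstar.subset_ground hy.1
  have hxy : x ≠ y := fun h => hy.2 (h ▸ hx.1)
  have hBfin : B.Finite := hfin.subset hB.subset_ground
  have hBsfin : Bstar.Finite := hfin.subset hBstar.subset_ground
  have hlt : μ x < μ y := by
    rcases lt_or_gt_of_ne (hinj x hxE y hyE hxy) with h | h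
    · exact h
    · exfalso
      have hle := hmax _ hbase2
      rw [weight_exchange μ hBsfin hy.1 hx.2] at hle
      linarith
  refine ⟨x, hx, y, hy, hbase1, hlt, ?_⟩
  rw [weight_exchange μ hBfin hx.1 hy.2]
  linarith
end

section
/- Let M = (E, 𝓘) be a matroid on a finite groundset E with set of bases 𝓑, let μ : E → ℝ assign positive, pairwise distinct weights, let B* be a maximum-weight basis, and let B be a basis with B ≠ B*. Let x be the element of B \ B* of minimum weight. Then for every α ∈ B* \ B such that (B \ {x}) ∪ {α} ∈ 𝓑, it holds that μ_α > μ_x. -/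
open Matroid

/-- If `x` is the minimum-weight element of `B \ B*`, then every `α ∈ B* \ B` for which
`(B \ {x}) ∪ {α}` is a basis satisfies `μ α > μ x`. -/
theorem min_elt_exchange_weight_lt {α : Type*} (M : Matroid α) (hfin : M.E.Finite) (μ : α → ℝ)
    (hpos : ∀ e ∈ M.E, 0 < μ e)
    (hinj : ∀ x ∈ M.E, ∀ y ∈ M.E, x ≠ y → μ x ≠ μ y)
    (Bstar : Set α) (hBstar : M.IsBase Bstar)
    (hmax : ∀ B, M.IsBase B → weight μ B ≤ weight μ Bstar)
    (B : Set α) (hB : M.IsBase B) (hne : B ≠ Bstar)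
    (x : α) (hx : x ∈ B \ Bstar) (hxmin : ∀ y ∈ B \ Bstar, μ x ≤ μ y) :
    ∀ a ∈ Bstar \ B, M.IsBase (B \ {x} ∪ {a}) → μ x < μ a := by
  intro a ha _hbase
  obtain ⟨b, hb, hbase'⟩ := hBstar.exchange hB ha
  by_contra hle
  push_neg at hle
  -- μ a ≤ μ x ≤ μ b, and μ a ≠ μ b gives μ a < μ b
  have haE : a ∈ M.E := hBstar.subset_ground ha.1
  have hbE : b ∈ M.E := hB.subset_ground hb.1
  have hab : a ≠ b := fun h => hb.2 (h ▸ ha.1)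
  have hlt : μ a < μ b :=
    lt_of_le_of_ne (hle.trans (hxmin b hb)) (hinj a haE b hbE hab)
  have hfinB : (Bstar \ {a}).Finite := (hfin.subset hBstar.subset_ground).subset Set.diff_subset
  have hbn : b ∉ Bstar \ {a} := fun h => hb.2 h.1
  have han : a ∉ Bstar \ {a} := fun h => h.2 rfl
  have h1 : weight μ (insert b (Bstar \ {a})) = μ b + weight μ (Bstar \ {a}) :=
    finsum_mem_insert μ hbn hfinB
  have h2 : weight μ Bstar = μ a + weight μ (Bstar \ {a}) := by
    have h3 : weight μ (insert a (Bstar \ {a})) = μ a + weight μ (Bstar \ {a}) :=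
      finsum_mem_insert μ han hfinB
    rwa [Set.insert_diff_singleton, Set.insert_eq_of_mem ha.1] at h3
  have := hmax _ hbase'
  rw [h1, h2] at this
  linarith
end

section
/- Let M = (E, 𝓘) be a matroid on a finite groundset E with set of bases 𝓑, let μ : E → ℝ assign positive, pairwise distinct weights, let B* be a maximum-weight basis, let B ≠ B* be a basis, and let x be the minimum-weight element of B \ B*. Suppose α ∈ B* \ B satisfies (B \ {x}) ∪ {α} ∈ 𝓑 and μ_α < μ_x. Then there exists β ∈ B \ (B* \ {α}) with (B* \ {α}) ∪ {β} ∈ 𝓑 and μ_β ≥ μ_x, and hence μ((B* \ {α}) ∪ {β}) > μ(B*), contradicting the maximality of B*; therefore no such α exists. -/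
open Matroid

lemma weight_finite_eq {α : Type*} (μ : α → ℝ) (S : Set α) (hS : S.Finite) :
    weight μ S = ∑ e ∈ hS.toFinset, μ e := by
  rw [weight, ← finsum_mem_coe_finset, Set.Finite.coe_toFinset]

/-- If `x` is the minimum-weight element of `B \ B*` and `α ∈ B* \ B` were such that
`(B \ {x}) ∪ {α}` is a basis with `μ α < μ x`, then there would be `β ∈ B \ (B* \ {α})`
with `(B* \ {α}) ∪ {β}` a basis, `μ β ≥ μ x`, hence of weight exceeding `μ(B*)`,
contradicting maximality of `B*`; therefore no such `α` exists. -/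
theorem no_light_exchange_into_min {α : Type*} (M : Matroid α) (hfin : M.E.Finite) (μ : α → ℝ)
    (hpos : ∀ e ∈ M.E, 0 < μ e)
    (hinj : ∀ x ∈ M.E, ∀ y ∈ M.E, x ≠ y → μ x ≠ μ y)
    (Bstar : Set α) (hBstar : M.IsBase Bstar)
    (hmax : ∀ B, M.IsBase B → weight μ B ≤ weight μ Bstar)
    (B : Set α) (hB : M.IsBase B) (hne : B ≠ Bstar)
    (x : α) (hx : x ∈ B \ Bstar) (hxmin : ∀ y ∈ B \ Bstar, μ x ≤ μ y)
    (a : α) (ha : a ∈ Bstar \ B) (haB : M.IsBase (B \ {x} ∪ {a})) (halt : μ a < μ x) :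
    (∃ b ∈ B \ (Bstar \ {a}), M.IsBase (Bstar \ {a} ∪ {b}) ∧ μ x ≤ μ b ∧
        weight μ Bstar < weight μ (Bstar \ {a} ∪ {b})) ∧ False := by
  classical
  obtain ⟨b, hb, hbBase⟩ := hBstar.exchange hB ha
  have hEq : Bstar \ {a} ∪ {b} = insert b (Bstar \ {a}) := Set.union_singleton
  have hbBase' : M.IsBase (Bstar \ {a} ∪ {b}) := by rwa [hEq]
  have hxb : μ x ≤ μ b := hxmin b ⟨hb.1, hb.2⟩
  have hBsfin : Bstar.Finite := hfin.subset hBstar.subset_ground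
  have hfin' : (Bstar \ {a} ∪ {b} : Set α).Finite :=
    (hBsfin.diff (t := {a})).union (Set.finite_singleton b)
  -- weight computation
  have hbne : b ∉ Bstar \ {a} := fun h => hb.2 h.1
  have hane : a ∈ Bstar := ha.1
  have hgt : weight μ Bstar < weight μ (Bstar \ {a} ∪ {b}) := by
    rw [weight_finite_eq μ _ hBsfin, weight_finite_eq μ _ hfin']
    have h1 : hfin'.toFinset = insert b (hBsfin.toFinset.erase a) := by
      ext y
      simp [Set.Finite.mem_toFinset, or_comm, and_comm]
    rw [h1, Finset.sum_insert (by simp [Set.Finite.mem_toFinset, hb.2]),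
      Finset.sum_erase_eq_sub (by simpa [Set.Finite.mem_toFinset] using hane)]
    have : μ a < μ b := lt_of_lt_of_le halt hxb
    linarith
  have hfalse : False := absurd (hmax _ hbBase') (not_le.mpr hgt)
  exact ⟨⟨b, ⟨hb.1, fun h => hb.2 h.1⟩, hbBase', hxb, hgt⟩, hfalse⟩
end
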